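/- arXiv:2009.01639 — 3 statements merged into one kernel-verified Lean document; each statement's English description precedes it below -/
import Mathlib

section
/- Let f, g : I → ℝ^n be n-times continuously differentiable functions such that both Wronskians W_f and W_g are nonvanishing on I. Then f and g are range equivalent (i.e., there exists a nonsingular n×n real matrix A with f = A·g on I) if and only if Φ_f^{[j]} = Φ_g^{[j]} on I for every j ∈ {0, ..., n−1}. -/
open Matrix

/-- Noncommutative complete Bell polynomials: `B_0 = I_n`,
`B_{m+1}(X_1,…,X_{m+1}) = ∑_{j=0}^m C(m,j) B_j(X_1,…,X_j) X_{m+1-j}`.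
Here `X : Fin m → _` with `X i` playing the role of `X_{i+1}`. -/
noncomputable def Bell {n : ℕ} :
    (m : ℕ) → (Fin m → Matrix (Fin n) (Fin n) ℝ) → Matrix (Fin n) (Fin n) ℝ
  | 0, _ => 1
  | m + 1, X => ∑ j : Fin (m + 1),
      (Nat.choose m (j : ℕ) : ℝ) •
        (Bell (j : ℕ) (fun i : Fin (j : ℕ) => X (Fin.castLE (by omega) i)) *
          X ⟨m - (j : ℕ), by omega⟩)

/-- Entrywise `k`-th derivative (within `I`) of a matrix-valued function. -/
noncomputable def matD {n : ℕ} (I : Set ℝ) (X : ℝ → Matrix (Fin n) (Fin n) ℝ) (k : ℕ)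
    (x : ℝ) : Matrix (Fin n) (Fin n) ℝ :=
  Matrix.of fun p q => iteratedDerivWithin k (fun t => X t p q) I x

/-- `B_j(X, X', …, X^{(j-1)})` evaluated at `x` (derivatives within `I`). -/
noncomputable def BellD {n : ℕ} (I : Set ℝ) (X : ℝ → Matrix (Fin n) (Fin n) ℝ) (j : ℕ)
    (x : ℝ) : Matrix (Fin n) (Fin n) ℝ :=
  Bell j (fun i : Fin j => matD I X (i : ℕ) x)

/-- Generalized Wronskian `W_f^k = det(f^{(k_1)} | … | f^{(k_n)})` (derivatives within `I`). -/
noncomputable def genW {n : ℕ} (I : Set ℝ) (f : ℝ → Fin n → ℝ) (k : Fin n → ℕ) (x : ℝ) : ℝ :=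
  Matrix.det (Matrix.of fun p q => iteratedDerivWithin (k q) (fun t => f t p) I x)

/-- The multi-index `(n-1, n-2, …, 1, 0)` of the ordinary Wronskian. -/
def wIdx (n : ℕ) : Fin n → ℕ := fun q => n - 1 - (q : ℕ)

/-- The multi-index `(n+d, n-1, …, j+1, j-1, …, 1, 0)`. -/
def dIdx (n d j : ℕ) : Fin n → ℕ :=
  fun q => if (q : ℕ) = 0 then n + d
    else if j < n - (q : ℕ) then n - (q : ℕ) else n - (q : ℕ) - 1

/-- `Φ_f^{[j]} = (-1)^{n-j-1} W_f^{(n,n-1,…,j+1,j-1,…,0)} / W_f`. -/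
noncomputable def Phi {n : ℕ} (I : Set ℝ) (f : ℝ → Fin n → ℝ) (j : ℕ) (x : ℝ) : ℝ :=
  (-1 : ℝ) ^ (n - j - 1) * genW I f (dIdx n 0 j) x / genW I f (wIdx n) x

/-- The `1`-indexed standard basis vector `e_i` of `ℝ^n`. -/
def stdB (n i : ℕ) : Fin n → ℝ := fun p => if (p : ℕ) + 1 = i then 1 else 0

/-- The matrix `X_a = (a | e_1 | … | e_{n-1})`. -/
def colMat {n : ℕ} (a : ℝ → Fin n → ℝ) (x : ℝ) : Matrix (Fin n) (Fin n) ℝ :=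
  Matrix.of fun p q =>
    if (q : ℕ) = 0 then a x p else if (p : ℕ) + 1 = (q : ℕ) then 1 else 0

/-- The matrix `Y_f = (f^{(n-1)} | … | f' | f)` (derivatives within `I`). -/
noncomputable def Yfun {n : ℕ} (I : Set ℝ) (f : ℝ → Fin n → ℝ) (x : ℝ) :
    Matrix (Fin n) (Fin n) ℝ :=
  Matrix.of fun p q => iteratedDerivWithin (n - 1 - (q : ℕ)) (fun t => f t p) I x

/-- The `1`-indexed component `a_i` of `a : I → ℝ^n`, with `a_i := 0` for `i > n`. -/
noncomputable def aExt {n : ℕ} (a : ℝ → Fin n → ℝ) (i : ℕ) : ℝ → ℝ :=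
  fun t => if h : i - 1 < n then a t ⟨i - 1, h⟩ else 0

/-- `y` is an `n`-times differentiable (on `I`) solution of
`y^{(n)} = a_1 y^{(n-1)} + ⋯ + a_n y`, where `a i` is `a_{i+1}`. -/
def SolvesDE {n : ℕ} (I : Set ℝ) (a : ℝ → Fin n → ℝ) (y : ℝ → ℝ) : Prop :=
  (∀ k < n, DifferentiableOn ℝ (iteratedDerivWithin k y I) I) ∧
    ∀ x ∈ I, iteratedDerivWithin n y I x =
      ∑ i : Fin n, a x i * iteratedDerivWithin (n - 1 - (i : ℕ)) y I x

/-- `f : I → ℝ^n` is a fundamental system of solutions of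
`y^{(n)} = a_1 y^{(n-1)} + ⋯ + a_n y`: each component solves the equation and the
components are linearly independent functions on `I`. -/
def FundSystem {n : ℕ} (I : Set ℝ) (a : ℝ → Fin n → ℝ) (f : ℝ → Fin n → ℝ) : Prop :=
  (∀ p : Fin n, SolvesDE I a fun t => f t p) ∧
    LinearIndependent ℝ fun p : Fin n => I.restrict fun t => f t p

open Set Topology

/-!
By Cramer's rule, `f^{(n)} = ∑_q Φ_f^{[n-1-q]} f^{(n-1-q)}`: the components of `f` solve the linear
ODE whose coefficients are the `Φ_f^{[j]}`, i.e. the Wronski matrix satisfies `Y_f' = Y_f X_a`.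
Each `Φ_f^{[j]}` is a quotient of generalized Wronskians, and both scale by `det A` when `f = A g`.
Conversely, if `Φ_f = Φ_g`, then `Y_f` and `A Y_g` with `A = Y_f(x₀) Y_g(x₀)⁻¹` solve the same
linear ODE and agree at `x₀`, hence agree on the interval `I`; their last columns give `f = A g`.
-/

theorem ODE_solution_unique_of_linear {E : Type*} [NormedAddCommGroup E] [NormedSpace ℝ E]
    {I : Set ℝ} (hIo : IsOpen I) (hIc : IsPreconnected I) {L : ℝ → E →L[ℝ] E}
    (hL : ContinuousOn L I) {u v : ℝ → E}
    (hu : ∀ t ∈ I, HasDerivAt u (L t (u t)) t) (hv : ∀ t ∈ I, HasDerivAt v (L t (v t)) t)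
    {t₀ : ℝ} (ht₀ : t₀ ∈ I) (huv : u t₀ = v t₀) : EqOn u v I := by
  have local_unique : ∀ t ∈ I, u t = v t → u =ᶠ[𝓝 t] v := by
    intro t ht heq
    have hI_nhds : ∀ᶠ s in 𝓝 t, s ∈ I := hIo.mem_nhds ht
    have hbound : ∀ᶠ s in 𝓝 t, ‖L s‖₊ < ‖L t‖₊ + 1 :=
      (continuous_nnnorm.continuousAt.comp (hL.continuousAt (hIo.mem_nhds ht))).eventually_lt
        continuousAt_const (lt_add_one _)
    refine ODE_solution_unique_of_eventually (s := fun _ => univ) (K := ‖L t‖₊ + 1)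
      (hbound.mono fun s hs => ((L s).lipschitz.weaken hs.le).lipschitzOnWith)
      (hI_nhds.mono fun s hs => ⟨hu s hs, trivial⟩) (hI_nhds.mono fun s hs => ⟨hv s hs, trivial⟩)
      heq
  -- The set where `u` and `v` agree near `t` is open, and closed in `I` by continuity.
  have hsub : I ⊆ {t | u =ᶠ[𝓝 t] v} := by
    refine hIc.subset_of_closure_inter_subset isOpen_setOfPred_eventually_nhds
      ⟨t₀, ht₀, local_unique t₀ ht₀ huv⟩ ?_
    rintro t ⟨htU, ht⟩
    refine local_unique t ht ?_
    have hU : EqOn u v {t | u =ᶠ[𝓝 t] v} := fun s hs => hs.eq_of_nhds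
    rw [mem_closure_iff_nhdsWithin_neBot] at htU
    exact tendsto_nhds_unique
      (((hu t ht).continuousAt.tendsto.mono_left nhdsWithin_le_nhds).congr'
        (eventuallyEq_nhdsWithin_of_eqOn hU))
      ((hv t ht).continuousAt.tendsto.mono_left nhdsWithin_le_nhds)
  exact fun t ht => (hsub ht).eq_of_nhds

/-- The row `(y^{(n-1)}, …, y', y)`; the rows of `Yfun I f` are the jets of the components of `f`.
-/
noncomputable def jet (I : Set ℝ) (n : ℕ) (y : ℝ → ℝ) (t : ℝ) : Fin n → ℝ :=
  fun q => iteratedDerivWithin (n - 1 - q) y I t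

lemma vecMul_colMat_apply_zero {m : ℕ} (a : ℝ → Fin (m + 1) → ℝ) (x : ℝ)
    (v : Fin (m + 1) → ℝ) : (v ᵥ* colMat a x) 0 = a x ⬝ᵥ v := by
  rw [dotProduct_comm]
  simp [vecMul, dotProduct, colMat]

lemma vecMul_colMat_apply_succ {m : ℕ} (a : ℝ → Fin (m + 1) → ℝ) (x : ℝ)
    (v : Fin (m + 1) → ℝ) (q : Fin m) : (v ᵥ* colMat a x) q.succ = v q.castSucc := by
  simp only [vecMul, dotProduct, colMat, of_apply, Fin.val_succ, Nat.add_one_ne_zero, if_false,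
    Nat.add_right_cancel_iff, mul_ite, mul_one, mul_zero, ← Fin.val_castSucc q, Fin.val_inj,
    Finset.sum_ite_eq', Finset.mem_univ, if_true]

lemma continuousOn_vecMul_colMat {n : ℕ} {I : Set ℝ} {a : ℝ → Fin n → ℝ}
    (ha : ContinuousOn a I) (v : Fin n → ℝ) : ContinuousOn (fun t => v ᵥ* colMat a t) I := by
  refine continuousOn_pi.2 fun q => ?_
  simp only [vecMul, dotProduct]
  refine continuousOn_finsetSum _ fun p _ => continuousOn_const.mul ?_
  simp only [colMat, of_apply]
  split_ifs
  exacts [continuousOn_pi.1 ha p, continuousOn_const, continuousOn_const]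

theorem SolvesDE.hasDerivAt_jet {n : ℕ} {I : Set ℝ} (hIo : IsOpen I) {a : ℝ → Fin n → ℝ}
    {y : ℝ → ℝ} (hy : SolvesDE I a y) {x : ℝ} (hx : x ∈ I) :
    HasDerivAt (jet I n y) (jet I n y x ᵥ* colMat a x) x := by
  refine hasDerivAt_pi.2 fun q => ?_
  have hder : HasDerivAt (iteratedDerivWithin (n - 1 - q) y I)
      (iteratedDerivWithin (n - q) y I x) x := by
    have h := ((hy.1 (n - 1 - q) (by omega)).differentiableAt (hIo.mem_nhds hx)).hasDerivAt
    rwa [← derivWithin_of_isOpen hIo hx, ← iteratedDerivWithin_succ,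
      show n - 1 - q + 1 = n - q by omega] at h
  suffices (jet I n y x ᵥ* colMat a x) q = iteratedDerivWithin (n - q) y I x by rwa [this]
  cases n with
  | zero => exact q.elim0
  | succ m =>
    cases q using Fin.cases with
    | zero => rw [vecMul_colMat_apply_zero, Fin.val_zero, Nat.sub_zero, hy.2 x hx]; rfl
    | succ q =>
      rw [vecMul_colMat_apply_succ]
      simp only [jet, Fin.val_succ, Fin.val_castSucc]
      congr 1
      omega

lemma SolvesDE.congr_coeff {n : ℕ} {I : Set ℝ} {a b : ℝ → Fin n → ℝ} {y : ℝ → ℝ}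
    (hy : SolvesDE I a y) (hab : EqOn a b I) : SolvesDE I b y :=
  ⟨hy.1, fun x hx => hab hx ▸ hy.2 x hx⟩

theorem Yfun_eq_mul_of_solvesDE {n : ℕ} {I : Set ℝ} (hIo : IsOpen I) (hIc : IsPreconnected I)
    {a : ℝ → Fin n → ℝ} (ha : ContinuousOn a I) {f g : ℝ → Fin n → ℝ}
    (hf : ∀ p, SolvesDE I a fun t => f t p) (hg : ∀ p, SolvesDE I a fun t => g t p)
    (A : Matrix (Fin n) (Fin n) ℝ) {x₀ : ℝ} (hx₀ : x₀ ∈ I)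
    (h₀ : Yfun I f x₀ = A * Yfun I g x₀) {x : ℝ} (hx : x ∈ I) :
    Yfun I f x = A * Yfun I g x := by
  ext p q
  have hrow : EqOn (fun t => Yfun I f t p) (fun t => ∑ r, A p r • Yfun I g t r) I := by
    refine ODE_solution_unique_of_linear hIo hIc
      (L := fun t => (colMat a t).vecMulLinear.toContinuousLinearMap)
      (continuousOn_clm_apply.2 (continuousOn_vecMul_colMat ha)) (fun t ht => ?_)
      (fun t ht => ?_) hx₀ ?_
    · exact (hf p).hasDerivAt_jet hIo ht
    · refine (HasDerivAt.fun_sum (u := Finset.univ) fun r _ =>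
        ((hg r).hasDerivAt_jet hIo ht).const_smul (A p r)).congr_deriv ?_
      simp only [LinearMap.coe_toContinuousLinearMap', vecMulLinear_apply, sum_vecMul, smul_vecMul]
      rfl
    · ext q
      simp [h₀, mul_apply]
  simpa [mul_apply] using congrFun (hrow hx) q

lemma eq_mulVec_of_Yfun_eq_mul {n : ℕ} {I : Set ℝ} {f g : ℝ → Fin n → ℝ}
    {A : Matrix (Fin n) (Fin n) ℝ} {x : ℝ} (h : Yfun I f x = A * Yfun I g x) :
    f x = A *ᵥ g x := by
  funext p
  have hlast : n - 1 < n := by have := p.isLt; omega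
  simpa [Yfun, mul_apply, mulVec, dotProduct] using congrFun (congrFun h p) ⟨n - 1, hlast⟩

theorem exists_eq_mulVec_of_solvesDE {n : ℕ} {I : Set ℝ} (hIo : IsOpen I)
    (hIc : IsPreconnected I) {a : ℝ → Fin n → ℝ} (ha : ContinuousOn a I) {f g : ℝ → Fin n → ℝ}
    (hf : ∀ p, SolvesDE I a fun t => f t p) (hg : ∀ p, SolvesDE I a fun t => g t p)
    {x₀ : ℝ} (hx₀ : x₀ ∈ I) (hWf : (Yfun I f x₀).det ≠ 0) (hWg : (Yfun I g x₀).det ≠ 0) :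
    ∃ A : Matrix (Fin n) (Fin n) ℝ, A.det ≠ 0 ∧ ∀ x ∈ I, f x = A *ᵥ g x := by
  refine ⟨Yfun I f x₀ * (Yfun I g x₀)⁻¹, by simp [det_mul, hWf, hWg], fun x hx =>
    eq_mulVec_of_Yfun_eq_mul (Yfun_eq_mul_of_solvesDE hIo hIc ha hf hg _ hx₀ ?_ hx)⟩
  rw [Matrix.mul_assoc, nonsing_inv_mul _ (isUnit_iff_ne_zero.2 hWg), Matrix.mul_one]

lemma wIdx_le (n : ℕ) (q : Fin n) : wIdx n q ≤ n := by
  simp only [wIdx]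
  omega

lemma dIdx_le (n j : ℕ) (q : Fin n) : dIdx n 0 j q ≤ n := by
  simp only [dIdx]
  split_ifs <;> omega

lemma genW_eq_det_mul_of_eq_mulVec {n N : ℕ} {I : Set ℝ} (hI : UniqueDiffOn ℝ I) {x : ℝ}
    (hx : x ∈ I) {f g : ℝ → Fin n → ℝ} {A : Matrix (Fin n) (Fin n) ℝ}
    (hfg : ∀ t ∈ I, f t = A *ᵥ g t) (hg : ∀ p, ContDiffOn ℝ (N : ℕ∞) (fun t => g t p) I)
    {k : Fin n → ℕ} (hk : ∀ q, k q ≤ N) :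
    genW I f k x = A.det * genW I g k x := by
  have hcols : (of fun p q => iteratedDerivWithin (k q) (fun t => f t p) I x)
      = A * of fun p q => iteratedDerivWithin (k q) (fun t => g t p) I x := by
    ext p q
    rw [of_apply, mul_apply, iteratedDerivWithin_congr (fun t ht => congrFun (hfg t ht) p) hx]
    simp only [mulVec, dotProduct]
    rw [iteratedDerivWithin_fun_sum (f := fun r t => A p r * g t r) hx hI fun r _ =>
      (((hg r).of_le (by exact_mod_cast hk q)).const_smul (A p r)) x hx]
    simp only [iteratedDerivWithin_const_mul_field, of_apply]
  rw [genW, hcols, det_mul]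
  rfl

lemma continuousOn_genW {n N : ℕ} {I : Set ℝ} (hI : UniqueDiffOn ℝ I) {f : ℝ → Fin n → ℝ}
    (hf : ∀ p, ContDiffOn ℝ (N : ℕ∞) (fun t => f t p) I) {k : Fin n → ℕ} (hk : ∀ q, k q ≤ N) :
    ContinuousOn (genW I f k) I :=
  continuous_id.matrix_det.comp_continuousOn <| continuousOn_pi.2 fun p => continuousOn_pi.2
    fun q => (hf p).continuousOn_iteratedDerivWithin (by exact_mod_cast hk q) hI

lemma Phi_eq_of_eq_mulVec {n : ℕ} {I : Set ℝ} (hI : UniqueDiffOn ℝ I) {x : ℝ} (hx : x ∈ I)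
    {f g : ℝ → Fin n → ℝ} {A : Matrix (Fin n) (Fin n) ℝ} (hA : A.det ≠ 0)
    (hfg : ∀ t ∈ I, f t = A *ᵥ g t) (hg : ∀ p, ContDiffOn ℝ (n : ℕ∞) (fun t => g t p) I)
    (j : ℕ) : Phi I f j x = Phi I g j x := by
  simp only [Phi, genW_eq_det_mul_of_eq_mulVec hI hx hfg hg (dIdx_le n j),
    genW_eq_det_mul_of_eq_mulVec hI hx hfg hg (wIdx_le n)]
  rw [mul_left_comm, mul_div_mul_left _ _ hA]

/-- `phiCoeffs I f x q = Φ_f^{[n-1-q]}(x)`, the coefficient `a_{q+1}` of `y^{(n-1-q)}`. -/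
noncomputable def phiCoeffs {n : ℕ} (I : Set ℝ) (f : ℝ → Fin n → ℝ) (x : ℝ) : Fin n → ℝ :=
  fun q => Phi I f (n - 1 - q) x

lemma continuousOn_phiCoeffs {n : ℕ} {I : Set ℝ} (hI : UniqueDiffOn ℝ I) {f : ℝ → Fin n → ℝ}
    (hf : ∀ p, ContDiffOn ℝ (n : ℕ∞) (fun t => f t p) I)
    (hW : ∀ x ∈ I, genW I f (wIdx n) x ≠ 0) : ContinuousOn (phiCoeffs I f) I :=
  continuousOn_pi.2 fun _ => (continuousOn_const.mul (continuousOn_genW hI hf (dIdx_le n _))).div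
    (continuousOn_genW hI hf (wIdx_le n)) hW

lemma updateCol_Yfun_eq_submatrix {n : ℕ} (I : Set ℝ) (f : ℝ → Fin n → ℝ) (x : ℝ) (q : Fin n) :
    (Yfun I f x).updateCol q (fun p => iteratedDerivWithin n (fun t => f t p) I x) =
      (of fun p c => iteratedDerivWithin (dIdx n 0 (n - 1 - q) c) (fun t => f t p) I x).submatrix
        id q.cycleRange := by
  have : NeZero n := ⟨by have := q.isLt; omega⟩
  ext p r
  simp only [updateCol_apply, submatrix_apply, id_eq, of_apply, Yfun]
  rcases lt_trichotomy r q with h | rfl | h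
  · have h' : (r : ℕ) < q := h
    rw [if_neg h.ne, dIdx, Fin.coe_cycleRange_of_lt h, if_neg (Nat.succ_ne_zero _),
      if_pos (by omega)]
    congr 1
    omega
  · simp [Fin.cycleRange_self, dIdx]
  · have h' : (q : ℕ) < r := h
    rw [if_neg h.ne', Fin.cycleRange_of_gt h, dIdx, if_neg (by omega), if_neg (by omega)]
    congr 1
    omega

lemma genW_dIdx_eq_det_updateCol {n : ℕ} (I : Set ℝ) (f : ℝ → Fin n → ℝ) (x : ℝ) (q : Fin n) :
    genW I f (dIdx n 0 (n - 1 - q)) x = (-1) ^ (q : ℕ) *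
      ((Yfun I f x).updateCol q (fun p => iteratedDerivWithin n (fun t => f t p) I x)).det := by
  rw [updateCol_Yfun_eq_submatrix, det_permute', Fin.sign_cycleRange, ← mul_assoc]
  push_cast
  rw [← mul_pow, neg_one_mul, neg_neg, one_pow, one_mul]
  rfl

lemma Yfun_mulVec_phiCoeffs {n : ℕ} {I : Set ℝ} {f : ℝ → Fin n → ℝ} {x : ℝ}
    (hW : (Yfun I f x).det ≠ 0) :
    Yfun I f x *ᵥ phiCoeffs I f x = fun p => iteratedDerivWithin n (fun t => f t p) I x := by
  have hcramer : phiCoeffs I f x = (Yfun I f x).det⁻¹ •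
      cramer (Yfun I f x) (fun p => iteratedDerivWithin n (fun t => f t p) I x) := by
    funext q
    rw [phiCoeffs, Phi, genW_dIdx_eq_det_updateCol, show n - (n - 1 - q) - 1 = q by omega,
      Pi.smul_apply, cramer_apply, smul_eq_mul, ← mul_assoc, ← pow_add, ← two_mul, pow_mul,
      neg_one_sq, one_pow, one_mul, div_eq_inv_mul]
    rfl
  rw [hcramer, mulVec_smul, mulVec_cramer, smul_smul, inv_mul_cancel₀ hW, one_smul]

theorem solvesDE_phiCoeffs {n : ℕ} {I : Set ℝ} (hI : UniqueDiffOn ℝ I) {f : ℝ → Fin n → ℝ}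
    (hf : ∀ p, ContDiffOn ℝ (n : ℕ∞) (fun t => f t p) I)
    (hW : ∀ x ∈ I, genW I f (wIdx n) x ≠ 0) (p : Fin n) :
    SolvesDE I (phiCoeffs I f) fun t => f t p := by
  refine ⟨fun k hk => (hf p).differentiableOn_iteratedDerivWithin (by exact_mod_cast hk) hI,
    fun x hx => ?_⟩
  rw [← congrFun (Yfun_mulVec_phiCoeffs (hW x hx)) p]
  simp only [mulVec, dotProduct, Yfun, of_apply]
  exact Finset.sum_congr rfl fun _ _ => mul_comm _ _

theorem stmt_15_general (n : ℕ) (I : Set ℝ) (hIo : IsOpen I) (hIne : I.Nonempty)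
    (hIc : I.OrdConnected) (f g : ℝ → Fin n → ℝ)
    (hf : ∀ p : Fin n, ContDiffOn ℝ ((n : ℕ) : ℕ∞) (fun t => f t p) I)
    (hg : ∀ p : Fin n, ContDiffOn ℝ ((n : ℕ) : ℕ∞) (fun t => g t p) I)
    (hWf : ∀ x ∈ I, genW I f (wIdx n) x ≠ 0)
    (hWg : ∀ x ∈ I, genW I g (wIdx n) x ≠ 0) :
    (∃ A : Matrix (Fin n) (Fin n) ℝ, A.det ≠ 0 ∧ ∀ x ∈ I, f x = A.mulVec (g x)) ↔
      ∀ j < n, ∀ x ∈ I, Phi I f j x = Phi I g j x := by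
  have hI : UniqueDiffOn ℝ I := hIo.uniqueDiffOn
  constructor
  · rintro ⟨A, hA, hfg⟩ j - x hx
    exact Phi_eq_of_eq_mulVec hI hx hA hfg hg j
  · intro hPhi
    obtain ⟨x₀, hx₀⟩ := hIne
    have hcoeffs : EqOn (phiCoeffs I f) (phiCoeffs I g) I := fun x hx =>
      funext fun q => hPhi _ (by have := q.isLt; omega) x hx
    exact exists_eq_mulVec_of_solvesDE hIo hIc.isPreconnected (continuousOn_phiCoeffs hI hg hWg)
      (fun p => (solvesDE_phiCoeffs hI hf hWf p).congr_coeff hcoeffs)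
      (solvesDE_phiCoeffs hI hg hWg) hx₀ (hWf x₀ hx₀) (hWg x₀ hx₀)

/-- for `n`-times continuously differentiable `f, g` with nonvanishing
Wronskians, `f` and `g` are range equivalent (`f = A·g` for a nonsingular matrix `A`)
iff `Φ_f^{[j]} = Φ_g^{[j]}` on `I` for all `0 ≤ j ≤ n-1`. -/
theorem stmt_15 (n : ℕ) (hn : 0 < n) (I : Set ℝ) (hIo : IsOpen I) (hIne : I.Nonempty)
    (hIc : I.OrdConnected) (f g : ℝ → Fin n → ℝ)
    (hf : ∀ p : Fin n, ContDiffOn ℝ ((n : ℕ) : ℕ∞) (fun t => f t p) I)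
    (hg : ∀ p : Fin n, ContDiffOn ℝ ((n : ℕ) : ℕ∞) (fun t => g t p) I)
    (hWf : ∀ x ∈ I, genW I f (wIdx n) x ≠ 0)
    (hWg : ∀ x ∈ I, genW I g (wIdx n) x ≠ 0) :
    (∃ A : Matrix (Fin n) (Fin n) ℝ, A.det ≠ 0 ∧ ∀ x ∈ I, f x = A.mulVec (g x)) ↔
      ∀ j < n, ∀ x ∈ I, Phi I f j x = Phi I g j x :=
  stmt_15_general n I hIo hIne hIc f g hf hg hWf hWg
end

section
/- Let f, g : I → ℝ^n be n-times continuously differentiable functions with nonvanishing Wronskians W_f and W_g on I, and suppose Φ_f^{[j]} = Φ_g^{[j]} on I for every j ∈ {0, ..., n−1}. Then each component of f is a linear combination (with constant real coefficients) of the components of g, and the resulting n×n coefficient matrix A with f = A·g is nonsingular. -/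
open Matrix

/-!
By Cramer's rule, `Φ_f^{[n-1-r]}` are the coefficients `a_r` of the linear equation
`y⁽ⁿ⁾ = ∑ r, a_r y⁽ⁿ⁻¹⁻ʳ⁾` solved by every component of `f`; in matrix form the Wronskian
matrix satisfies `Y_f' = Y_f X_a`. As `f` and `g` have the same `Φ`, also `Y_g' = Y_g X_a`, so
`Y_f Y_g⁻¹` has zero derivative on the interval and equals a constant `A`. Then `Y_f = A Y_g`,
`A` is invertible because `det Y_f ≠ 0`, and the last columns give `f = A g`.
-/

theorem hasDerivAt_iteratedDerivWithin {f : ℝ → ℝ} {I : Set ℝ} (hI : IsOpen I) {n k : ℕ}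
    (hf : ContDiffOn ℝ n f I) (hk : k < n) {x : ℝ} (hx : x ∈ I) :
    HasDerivAt (iteratedDerivWithin k f I) (iteratedDerivWithin (k + 1) f I x) x := by
  have hd := hf.differentiableOn_iteratedDerivWithin (by exact_mod_cast hk) hI.uniqueDiffOn x hx
  rw [iteratedDerivWithin_succ]
  exact hd.hasDerivWithinAt.hasDerivAt (hI.mem_nhds hx)

theorem hasDerivAt_mul_ringInverse_of_hasDerivAt_mul_right {𝕜 R : Type*}
    [NontriviallyNormedField 𝕜] [NormedRing R] [NormedAlgebra 𝕜 R] [CompleteSpace R]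
    {F G : 𝕜 → R} {K : R} {x : 𝕜}
    (hF : HasDerivAt F (F x * K) x) (hG : HasDerivAt G (G x * K) x) (hGx : IsUnit (G x)) :
    HasDerivAt (fun t => F t * Ring.inverse (G t)) 0 x := by
  obtain ⟨u, hu⟩ := hGx
  have hinv : HasDerivAt (fun t => Ring.inverse (G t)) (-(↑u⁻¹ * (G x * K) * ↑u⁻¹)) x := by
    simpa using (hu ▸ hasFDerivAt_ringInverse (𝕜 := 𝕜) u).comp_hasDerivAt x hG
  convert hF.mul hinv using 1
  · rfl
  · rw [← hu, Ring.inverse_unit]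
    simp [mul_assoc]

theorem IsOpen.exists_eq_mul_of_hasDerivAt_mul_right {𝕜 R : Type*} [RCLike 𝕜] [NormedRing R]
    [NormedAlgebra 𝕜 R] [CompleteSpace R] {s : Set 𝕜} (hs : IsOpen s) (hs' : IsPreconnected s)
    {F G K : 𝕜 → R} (hF : ∀ x ∈ s, HasDerivAt F (F x * K x) x)
    (hG : ∀ x ∈ s, HasDerivAt G (G x * K x) x) (hGu : ∀ x ∈ s, IsUnit (G x)) :
    ∃ A : R, ∀ x ∈ s, F x = A * G x := by
  have hN x (hx : x ∈ s) : HasDerivAt (fun t => F t * Ring.inverse (G t)) 0 x :=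
    hasDerivAt_mul_ringInverse_of_hasDerivAt_mul_right (hF x hx) (hG x hx) (hGu x hx)
  obtain ⟨A, hA⟩ := hs.exists_is_const_of_deriv_eq_zero hs'
    (fun x hx => (hN x hx).differentiableAt.differentiableWithinAt) (fun x hx => (hN x hx).deriv)
  refine ⟨A, fun x hx => ?_⟩
  rw [← hA x hx, mul_assoc, Ring.inverse_mul_cancel _ (hGu x hx), mul_one]

section Wronskian

variable {n : ℕ} {I : Set ℝ} {f : ℝ → Fin n → ℝ} {x : ℝ}

theorem det_updateCol_Yfun_eq_genW_dIdx (r : Fin n) :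
    ((Yfun I f x).updateCol r fun p => iteratedDerivWithin n (fun t => f t p) I x).det =
      (-1) ^ (r : ℕ) * genW I f (dIdx n 0 (n - 1 - r)) x := by
  -- `cycleRange r` moves column `r`, the one holding `f⁽ⁿ⁾`, to the front.
  have hperm : ((Yfun I f x).updateCol r fun p => iteratedDerivWithin n (fun t => f t p) I x) =
      (Matrix.of fun p q => iteratedDerivWithin (dIdx n 0 (n - 1 - r) q) (fun t => f t p) I x
        ).submatrix id (Fin.cycleRange r) := by
    ext p q
    have hc : (Fin.cycleRange r q : ℕ) =
        if (q : ℕ) < r then (q : ℕ) + 1 else if (q : ℕ) = r then 0 else (q : ℕ) := by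
      rcases lt_trichotomy q r with h | rfl | h
      · simp [Fin.coe_cycleRange_of_lt h, h]
      · simp [Fin.coe_cycleRange_of_le le_rfl]
      · have := Fin.lt_def.1 h
        rw [Fin.cycleRange_of_gt h, if_neg (by omega), if_neg (by omega)]
    simp only [updateCol_apply, Yfun, dIdx, submatrix_apply, of_apply, id, hc, Fin.ext_iff]
    split_ifs <;> first | rfl | contradiction | omega | (congr 1; omega)
  rw [hperm, det_permute', Fin.sign_cycleRange]
  push_cast
  rfl

theorem Phi_eq_det_updateCol_div (r : Fin n) :
    Phi I f (n - 1 - r) x =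
      ((Yfun I f x).updateCol r fun p => iteratedDerivWithin n (fun t => f t p) I x).det /
        (Yfun I f x).det := by
  rw [det_updateCol_Yfun_eq_genW_dIdx, Phi, show n - (n - 1 - r) - 1 = r by omega]
  rfl

theorem iteratedDerivWithin_eq_Yfun_mulVec_Phi (hW : genW I f (wIdx n) x ≠ 0) :
    (fun p => iteratedDerivWithin n (fun t => f t p) I x) =
      Yfun I f x *ᵥ fun r : Fin n => Phi I f (n - 1 - r) x := by
  have hcramer : (fun r : Fin n => Phi I f (n - 1 - r) x) = (Yfun I f x).det⁻¹ •
      cramer (Yfun I f x) fun p => iteratedDerivWithin n (fun t => f t p) I x := by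
    ext r
    rw [Phi_eq_det_updateCol_div, Pi.smul_apply, cramer_apply, smul_eq_mul, div_eq_inv_mul]
  have hY : (Yfun I f x).det ≠ 0 := hW
  rw [hcramer, mulVec_smul, mulVec_cramer, smul_smul, inv_mul_cancel₀ hY, one_smul]

theorem hasDerivAt_Yfun (hI : IsOpen I) (hf : ∀ p, ContDiffOn ℝ n (fun t => f t p) I)
    (hW : genW I f (wIdx n) x ≠ 0) (hx : x ∈ I) :
    HasDerivAt (Yfun I f)
      (Yfun I f x * colMat (fun t (r : Fin n) => Phi I f (n - 1 - r) t) x) x := by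
  refine hasDerivAt_pi.2 fun p => hasDerivAt_pi.2 fun q => ?_
  show HasDerivAt (iteratedDerivWithin (n - 1 - q) (fun t => f t p) I) _ x
  convert hasDerivAt_iteratedDerivWithin hI (hf p) (show n - 1 - q < n by omega) hx using 1
  rw [mul_apply]
  rcases Nat.eq_zero_or_pos q with hq | hq
  · simp only [colMat, of_apply, hq, if_true]
    rw [show n - 1 - 0 + 1 = n by omega]
    exact (congrFun (iteratedDerivWithin_eq_Yfun_mulVec_Phi hW) p).symm
  · rw [Finset.sum_eq_single ⟨(q : ℕ) - 1, by omega⟩]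
    · simp only [colMat, Yfun, of_apply, hq.ne', if_false, mul_ite, mul_one, mul_zero]
      rw [if_pos (by omega)]
      congr 1; omega
    · intro r _ hr
      replace hr : (r : ℕ) ≠ q - 1 := fun h => hr (Fin.ext h)
      simp only [colMat, of_apply, hq.ne', if_false, mul_ite, mul_one, mul_zero]
      exact if_neg (by omega)
    · simp

end Wronskian

attribute [local instance] Matrix.linftyOpNormedRing Matrix.linftyOpNormedAlgebra

theorem stmt_16_general (n : ℕ) (I : Set ℝ) (hIo : IsOpen I) (hIne : I.Nonempty)
    (hIc : I.OrdConnected) (f g : ℝ → Fin n → ℝ)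
    (hf : ∀ p : Fin n, ContDiffOn ℝ ((n : ℕ) : ℕ∞) (fun t => f t p) I)
    (hg : ∀ p : Fin n, ContDiffOn ℝ ((n : ℕ) : ℕ∞) (fun t => g t p) I)
    (hWf : ∀ x ∈ I, genW I f (wIdx n) x ≠ 0)
    (hWg : ∀ x ∈ I, genW I g (wIdx n) x ≠ 0)
    (hPhi : ∀ j < n, ∀ x ∈ I, Phi I f j x = Phi I g j x) :
    ∃ A : Matrix (Fin n) (Fin n) ℝ, A.det ≠ 0 ∧
      ∀ x ∈ I, ∀ p : Fin n, f x p = ∑ q : Fin n, A p q * g x q := by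
  have hcoeff : ∀ x ∈ I, colMat (fun t (r : Fin n) => Phi I g (n - 1 - r) t) x =
      colMat (fun t (r : Fin n) => Phi I f (n - 1 - r) t) x := by
    intro x hx
    ext p q
    simp only [colMat, of_apply, hPhi _ (by omega : n - 1 - p < n) x hx]
  obtain ⟨A, hA⟩ := hIo.exists_eq_mul_of_hasDerivAt_mul_right hIc.isPreconnected
    (F := Yfun I f) (G := Yfun I g) (K := colMat fun t (r : Fin n) => Phi I f (n - 1 - r) t)
    (fun x hx => hasDerivAt_Yfun hIo hf (hWf x hx) hx)
    (fun x hx => hcoeff x hx ▸ hasDerivAt_Yfun hIo hg (hWg x hx) hx)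
    (fun x hx => (isUnit_iff_isUnit_det _).2 (hWg x hx).isUnit)
  obtain ⟨x₀, hx₀⟩ := hIne
  refine ⟨A, fun hA₀ => hWf x₀ hx₀ ?_, fun x hx p => ?_⟩
  · change (Yfun I f x₀).det = 0
    rw [hA x₀ hx₀, det_mul, hA₀, zero_mul]
  · have hcol := congrFun (congrFun (hA x hx) p) ⟨n - 1, by have := p.isLt; omega⟩
    simpa [Yfun, mul_apply] using hcol

/-- for `n`-times continuously differentiable `f, g` with nonvanishing
Wronskians and `Φ_f^{[j]} = Φ_g^{[j]}` on `I` for all `j`, each component of `f` is a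
constant-coefficient linear combination of the components of `g`, with nonsingular
coefficient matrix `A` satisfying `f = A·g` on `I`. -/
theorem stmt_16 (n : ℕ) (hn : 0 < n) (I : Set ℝ) (hIo : IsOpen I) (hIne : I.Nonempty)
    (hIc : I.OrdConnected) (f g : ℝ → Fin n → ℝ)
    (hf : ∀ p : Fin n, ContDiffOn ℝ ((n : ℕ) : ℕ∞) (fun t => f t p) I)
    (hg : ∀ p : Fin n, ContDiffOn ℝ ((n : ℕ) : ℕ∞) (fun t => g t p) I)
    (hWf : ∀ x ∈ I, genW I f (wIdx n) x ≠ 0)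
    (hWg : ∀ x ∈ I, genW I g (wIdx n) x ≠ 0)
    (hPhi : ∀ j < n, ∀ x ∈ I, Phi I f j x = Phi I g j x) :
    ∃ A : Matrix (Fin n) (Fin n) ℝ, A.det ≠ 0 ∧
      ∀ x ∈ I, ∀ p : Fin n, f x p = ∑ q : Fin n, A p q * g x q :=
  stmt_16_general n I hIo hIne hIc f g hf hg hWf hWg hPhi
end

section
/- Let n ∈ ℕ, let a = (a_1, ..., a_n) : I → ℝ^n be a twice differentiable function, and define X_a := (a | e_1 | ... | e_{n−1}). Then for every j ∈ {0, ..., n−1}, the inner product ⟨ B_3(X_a, X_a', X_a'') e_1, e_{n−j} ⟩ equals a_1² a_{n−j} + a_1 a_{n−j+1} + a_2 a_{n−j} + a_{n−j+2} + a_1 a_{n−j}' + 2 a_1' a_{n−j} + 2 a_{n−j+1}' + a_{n−j}'' on I, where a_{n+1} := a_{n+2} := 0; that is, this is the (n−j)-th entry of (X_a³ + 2 X_a X_a' + X_a' X_a + X_a'') e_1. -/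
open Matrix

/-!
Write `X_a = a e₁ᵀ + S`, with `S` the shift matrix `(0 | e₁ | … | e_{n-1})`. Since `S` is
constant, every derivative of `X_a` only sees the first column: `X_a^{(k)} = a^{(k)} e₁ᵀ` for
`k ≥ 1`. Hence each word in `B₃(X_a, X_a', X_a'')` acts on vectors by the two rules
`X_a v = v₁ a + S v` and `X_a^{(k)} v = v₁ a^{(k)}`, and applying them to `e₁` gives the stated
entries; reading vectors as zero-padded sequences accounts for `a_{n+1} = a_{n+2} = 0`.
-/

section

variable {n : ℕ}

lemma Bell_three (X : Fin 3 → Matrix (Fin n) (Fin n) ℝ) :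
    Bell 3 X = X 0 ^ 3 + 2 • (X 0 * X 1) + X 1 * X 0 + X 2 := by
  simp [Bell, Fin.sum_univ_three, pow_three', add_mul, two_smul]
  abel

lemma matD_zero (I : Set ℝ) (X : ℝ → Matrix (Fin n) (Fin n) ℝ) (x : ℝ) :
    matD I X 0 x = X x := by
  ext p q
  simp [matD]

lemma BellD_three (I : Set ℝ) (X : ℝ → Matrix (Fin n) (Fin n) ℝ) (x : ℝ) :
    BellD I X 3 x =
      X x ^ 3 + 2 • (X x * matD I X 1 x) + matD I X 1 x * X x + matD I X 2 x := by
  simp [BellD, Bell_three, matD_zero]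

def extendZero (v : Fin n → ℝ) (i : ℕ) : ℝ := if h : i < n then v ⟨i, h⟩ else 0

lemma extendZero_add (u v : Fin n → ℝ) (i : ℕ) :
    extendZero (u + v) i = extendZero u i + extendZero v i := by
  unfold extendZero; split <;> simp

lemma sum_ite_val_eq_extendZero (f : Fin n → ℝ) (i : ℕ) :
    (∑ q : Fin n, if (q : ℕ) = i then f q else 0) = extendZero f i := by
  rw [extendZero]
  split_ifs with h
  · rw [Finset.sum_eq_single_of_mem ⟨i, h⟩ (Finset.mem_univ _)]
    · simp
    · intro q _ hq
      rw [if_neg (fun hqi => hq (Fin.ext hqi))]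
  · exact Finset.sum_eq_zero fun q _ => if_neg (by omega)

lemma dotProduct_stdB_succ (w : Fin n → ℝ) (i : ℕ) :
    w ⬝ᵥ stdB n (i + 1) = extendZero w i := by
  rw [← sum_ite_val_eq_extendZero]
  refine Finset.sum_congr rfl fun q _ => ?_
  simp [stdB]

lemma extendZero_stdB_one_zero (hn : 0 < n) : extendZero (stdB n 1) 0 = 1 := by
  simp [extendZero, stdB, hn]

lemma extendZero_stdB_one_succ (i : ℕ) : extendZero (stdB n 1) (i + 1) = 0 := by
  unfold extendZero stdB
  split_ifs <;> simp_all

def firstColMat (u : Fin n → ℝ) : Matrix (Fin n) (Fin n) ℝ :=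
  Matrix.of fun p q => if (q : ℕ) = 0 then u p else 0

def shiftMat (n : ℕ) : Matrix (Fin n) (Fin n) ℝ :=
  Matrix.of fun p q => if (p : ℕ) + 1 = q then 1 else 0

lemma colMat_eq (a : ℝ → Fin n → ℝ) (x : ℝ) :
    colMat a x = firstColMat (a x) + shiftMat n := by
  ext p q
  by_cases hq : (q : ℕ) = 0 <;> simp [colMat, firstColMat, shiftMat, hq]

lemma matD_colMat (I : Set ℝ) (a : ℝ → Fin n → ℝ) {k : ℕ} (hk : k ≠ 0) (x : ℝ) :
    matD I (colMat a) k x = firstColMat fun p => iteratedDerivWithin k (fun t => a t p) I x := by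
  ext p q
  by_cases hq : (q : ℕ) = 0 <;>
    simp [matD, colMat, firstColMat, hq, iteratedDerivWithin_const, hk]

lemma extendZero_firstColMat_mulVec (u v : Fin n → ℝ) (i : ℕ) :
    extendZero (firstColMat u *ᵥ v) i = extendZero u i * extendZero v 0 := by
  have hrow : ∀ p, (firstColMat u *ᵥ v) p = u p * extendZero v 0 := by
    intro p
    simp only [mulVec, dotProduct, firstColMat, of_apply, ite_mul, zero_mul,
      sum_ite_val_eq_extendZero]
    unfold extendZero
    split_ifs <;> simp
  by_cases hi : i < n <;> simp [extendZero, hi, hrow]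

lemma extendZero_shiftMat_mulVec (v : Fin n → ℝ) (i : ℕ) :
    extendZero (shiftMat n *ᵥ v) i = extendZero v (i + 1) := by
  have hrow : ∀ p : Fin n, (shiftMat n *ᵥ v) p = extendZero v (p + 1) := by
    intro p
    simp only [mulVec, dotProduct, shiftMat, of_apply, ite_mul, one_mul, zero_mul, eq_comm,
      sum_ite_val_eq_extendZero]
  by_cases hi : i < n
  · simp [extendZero, hi, hrow]
  · simp [extendZero, hi, show ¬ i + 1 < n by omega]

lemma aExt_succ_apply (a : ℝ → Fin n → ℝ) (i : ℕ) (x : ℝ) :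
    aExt a (i + 1) x = extendZero (a x) i := by
  simp [aExt, extendZero]

lemma iteratedDerivWithin_aExt_succ (I : Set ℝ) (a : ℝ → Fin n → ℝ) (k i : ℕ) (x : ℝ) :
    iteratedDerivWithin k (aExt a (i + 1)) I x =
      extendZero (fun p => iteratedDerivWithin k (fun t => a t p) I x) i := by
  have : aExt a (i + 1) = fun t => extendZero (a t) i := funext (aExt_succ_apply a i)
  by_cases h : i < n <;> simp [this, extendZero, h]

lemma derivWithin_aExt_succ (I : Set ℝ) (a : ℝ → Fin n → ℝ) (i : ℕ) (x : ℝ) :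
    derivWithin (aExt a (i + 1)) I x =
      extendZero (fun p => derivWithin (fun t => a t p) I x) i := by
  simpa using iteratedDerivWithin_aExt_succ I a 1 i x

lemma bell_three_colMat_mulVec_stdB_one_entry (I : Set ℝ) (a : ℝ → Fin n → ℝ)
    (x : ℝ) (i : ℕ) :
    (colMat a x ^ 3 + 2 • (colMat a x * matD I (colMat a) 1 x) +
          matD I (colMat a) 1 x * colMat a x + matD I (colMat a) 2 x) *ᵥ
            stdB n 1 ⬝ᵥ stdB n (i + 1) =
        aExt a 1 x ^ 2 * aExt a (i + 1) x + aExt a 1 x * aExt a (i + 1 + 1) x +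
          aExt a 2 x * aExt a (i + 1) x + aExt a (i + 1 + 2) x +
          aExt a 1 x * derivWithin (aExt a (i + 1)) I x +
          2 * derivWithin (aExt a 1) I x * aExt a (i + 1) x +
          2 * derivWithin (aExt a (i + 1 + 1)) I x +
          iteratedDerivWithin 2 (aExt a (i + 1)) I x := by
  rcases n.eq_zero_or_pos with rfl | hn
  · have h0 (k : ℕ) : aExt a k = 0 := funext fun t => by simp [aExt]
    simp [h0]
  rw [show aExt a 1 = aExt a (0 + 1) from rfl, show aExt a 2 = aExt a (1 + 1) from rfl,
    show i + 1 + 2 = i + 2 + 1 from rfl]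
  simp only [aExt_succ_apply, derivWithin_aExt_succ, iteratedDerivWithin_aExt_succ,
    dotProduct_stdB_succ, pow_three', two_smul, add_mulVec, ← mulVec_mulVec, extendZero_add,
    matD_colMat I a one_ne_zero, matD_colMat I a two_ne_zero, iteratedDerivWithin_one, colMat_eq,
    extendZero_firstColMat_mulVec, extendZero_shiftMat_mulVec,
    extendZero_stdB_one_zero hn, extendZero_stdB_one_succ]
  ring

end

theorem stmt_18_general (n : ℕ) (I : Set ℝ) (a : ℝ → Fin n → ℝ) :
    ∀ j < n, ∀ x ∈ I,
      ((BellD I (colMat a) 3 x).mulVec (stdB n 1) ⬝ᵥ stdB n (n - j) =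
        aExt a 1 x ^ 2 * aExt a (n - j) x + aExt a 1 x * aExt a (n - j + 1) x +
          aExt a 2 x * aExt a (n - j) x + aExt a (n - j + 2) x +
          aExt a 1 x * derivWithin (aExt a (n - j)) I x +
          2 * derivWithin (aExt a 1) I x * aExt a (n - j) x +
          2 * derivWithin (aExt a (n - j + 1)) I x +
          iteratedDerivWithin 2 (aExt a (n - j)) I x) ∧
      (colMat a x ^ 3 + 2 • (colMat a x * matD I (colMat a) 1 x) +
          matD I (colMat a) 1 x * colMat a x + matD I (colMat a) 2 x).mulVec
            (stdB n 1) ⬝ᵥ stdB n (n - j) =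
        aExt a 1 x ^ 2 * aExt a (n - j) x + aExt a 1 x * aExt a (n - j + 1) x +
          aExt a 2 x * aExt a (n - j) x + aExt a (n - j + 2) x +
          aExt a 1 x * derivWithin (aExt a (n - j)) I x +
          2 * derivWithin (aExt a 1) I x * aExt a (n - j) x +
          2 * derivWithin (aExt a (n - j + 1)) I x +
          iteratedDerivWithin 2 (aExt a (n - j)) I x := by
  intro j hj x _
  obtain ⟨i, hi⟩ : ∃ i, n - j = i + 1 := ⟨n - j - 1, by omega⟩
  rw [BellD_three, and_self, hi]
  exact bell_three_colMat_mulVec_stdB_one_entry I a x i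

/-- for twice differentiable `a`,
`⟨B_3(X_a, X_a', X_a'') e_1, e_{n-j}⟩ = a_1² a_{n-j} + a_1 a_{n-j+1} + a_2 a_{n-j}
+ a_{n-j+2} + a_1 a_{n-j}' + 2 a_1' a_{n-j} + 2 a_{n-j+1}' + a_{n-j}''` on `I` for
`0 ≤ j ≤ n-1` (with `a_{n+1} := a_{n+2} := 0`); i.e. this is the `(n-j)`-th entry of
`(X_a³ + 2 X_a X_a' + X_a' X_a + X_a'') e_1`. -/
theorem stmt_18 (n : ℕ) (hn : 0 < n) (I : Set ℝ) (hIo : IsOpen I) (hIne : I.Nonempty)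
    (hIc : I.OrdConnected) (a : ℝ → Fin n → ℝ)
    (ha : ∀ i : Fin n, DifferentiableOn ℝ (fun t => a t i) I)
    (ha' : ∀ i : Fin n, DifferentiableOn ℝ (derivWithin (fun t => a t i) I) I) :
    ∀ j < n, ∀ x ∈ I,
      ((BellD I (colMat a) 3 x).mulVec (stdB n 1) ⬝ᵥ stdB n (n - j) =
        aExt a 1 x ^ 2 * aExt a (n - j) x + aExt a 1 x * aExt a (n - j + 1) x +
          aExt a 2 x * aExt a (n - j) x + aExt a (n - j + 2) x +
          aExt a 1 x * derivWithin (aExt a (n - j)) I x +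
          2 * derivWithin (aExt a 1) I x * aExt a (n - j) x +
          2 * derivWithin (aExt a (n - j + 1)) I x +
          iteratedDerivWithin 2 (aExt a (n - j)) I x) ∧
      (colMat a x ^ 3 + 2 • (colMat a x * matD I (colMat a) 1 x) +
          matD I (colMat a) 1 x * colMat a x + matD I (colMat a) 2 x).mulVec
            (stdB n 1) ⬝ᵥ stdB n (n - j) =
        aExt a 1 x ^ 2 * aExt a (n - j) x + aExt a 1 x * aExt a (n - j + 1) x +
          aExt a 2 x * aExt a (n - j) x + aExt a (n - j + 2) x +
          aExt a 1 x * derivWithin (aExt a (n - j)) I x +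
          2 * derivWithin (aExt a 1) I x * aExt a (n - j) x +
          2 * derivWithin (aExt a (n - j + 1)) I x +
          iteratedDerivWithin 2 (aExt a (n - j)) I x :=
  stmt_18_general n I a
end
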